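/- arXiv:1609.07776 — 2 statements merged into one kernel-verified Lean document; each statement's English description precedes it below -/
import Mathlib

section
/- Let A and B be C*-algebras with A unital, and let T : A → B be a linear map which is a *-homomorphism at the unit of A. Then T is a Jordan *-homomorphism, that is, T(a*) = T(a)* for every a ∈ A and T(a²) = T(a)² for every a ∈ A. -/
/-!
For a unitary `u` we have `u * star u = star u * u = 1`, so the hypothesis gives
`T u * star (T u) = star (T u) * T u = T 1`. Hence `p = T 1` is a projection and every `T u` is
a contraction with `T u * p = p * T u = T u`. Since the unitaries span `A` with coefficients of
norm at most `‖a‖ / 2`, `T` is bounded and `p` acts as a unit on both sides of its range.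

For skew-adjoint `k` the curve `t ↦ exp (t • k)` stays in the unitary group, so
`t ↦ T (exp (t • k)) * star (T (exp (t • k)))` is constant. Its first derivative at `0` gives
`star (T k) = -T k`, its second `T (k * k) = T k * T k`. Passing to self-adjoint elements via
`h ↦ I • h` and decomposing `a = ℜ a + I • ℑ a` gives both identities for all `a`.
-/

/-- A map `T` between C*-algebras is a `*`-homomorphism at the point `z` if
`a * b* = z` implies `T (a * b*) = T a * (T b)* = T z` and
`c* * d = z` implies `T (c* * d) = (T c)* * T d = T z`. -/
def IsStarHomAt {A B : Type*} [Mul A] [Star A] [Mul B] [Star B]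
    (T : A → B) (z : A) : Prop :=
  (∀ a b : A, a * star b = z →
      T (a * star b) = T a * star (T b) ∧ T a * star (T b) = T z) ∧
  (∀ c d : A, star c * d = z →
      T (star c * d) = star (T c) * T d ∧ star (T c) * T d = T z)

open Complex NormedSpace

theorem IsStarProjection.of_mul_star_self_eq {R : Type*} [Mul R] [StarMul R] {p : R}
    (hp : p * star p = p) : IsStarProjection p := by
  have hstar : star p = p := by
    have h := congrArg star hp
    rwa [star_mul, star_star, hp, eq_comm] at h
  exact ⟨by rwa [hstar] at hp, hstar⟩

theorem CStarRing.mul_eq_self_of_star_mul_self_eq {E : Type*} [NonUnitalNormedRing E]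
    [StarRing E] [CStarRing E] {v p : E} (hp : IsIdempotentElem p) (hv : star v * v = p) :
    v * p = v := by
  have hp_star : star p = p := by rw [← hv, star_mul, star_star]
  rw [← sub_eq_zero, ← CStarRing.star_mul_self_eq_zero_iff]
  calc star (v * p - v) * (v * p - v)
      = p * (star v * v) * p - p * (star v * v) - star v * v * p + star v * v := by
        rw [star_sub, star_mul, hp_star]; noncomm_ring
    _ = 0 := by rw [hv, hp.eq, hp.eq]; abel

theorem CStarRing.norm_le_one_of_star_mul_self_eq {E : Type*} [NonUnitalNormedRing E]
    [StarRing E] [CStarRing E] {v p : E} (hp : IsStarProjection p) (hv : star v * v = p) :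
    ‖v‖ ≤ 1 := by
  have h := hp.norm_le
  rw [← hv, CStarRing.norm_star_mul_self] at h
  nlinarith [norm_nonneg v]

theorem CStarAlgebra.norm_apply_le_two_mul_of_forall_mem_unitary {A E : Type*} [CStarAlgebra A]
    [SeminormedAddCommGroup E] [NormedSpace ℂ E] (T : A →ₗ[ℂ] E)
    (hT : ∀ u ∈ unitary A, ‖T u‖ ≤ 1) (a : A) : ‖T a‖ ≤ 2 * ‖a‖ := by
  obtain ⟨u, c, rfl, hc⟩ := CStarAlgebra.exists_sum_four_unitary a
  calc ‖T (∑ i, c i • (u i : A))‖ ≤ ∑ i, ‖c i‖ * ‖T (u i)‖ := by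
        simpa only [map_sum, map_smul, norm_smul] using
          norm_sum_le Finset.univ fun i => c i • T (u i)
    _ ≤ ∑ _i : Fin 4, ‖∑ i, c i • (u i : A)‖ / 2 := by
        gcongr with i
        exact mul_le_of_le_one_right (norm_nonneg _) (hT _ (u i).2) |>.trans (hc i)
    _ = 2 * ‖∑ i, c i • (u i : A)‖ := by simp; ring

theorem HasDerivAt.mul_star {B : Type*} [NonUnitalNormedRing B] [StarRing B] [ContinuousStar B]
    [NormedSpace ℝ B] [IsScalarTower ℝ B B] [SMulCommClass ℝ B B] [StarModule ℝ B]
    {f g : ℝ → B} {f' g' : B} {t : ℝ} (hf : HasDerivAt f f' t) (hg : HasDerivAt g g' t) :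
    HasDerivAt (fun s => f s * star (g s)) (f t * star g' + f' * star (g t)) t := by
  simpa using
    (ContinuousLinearMap.mul ℝ B).hasDerivAt_of_bilinear (fun _ => hf) (fun _ => hg.star)

section Derivatives

variable {B : Type*} [NonUnitalNormedRing B] [StarRing B] [ContinuousStar B]
    [NormedSpace ℝ B] [IsScalarTower ℝ B B] [SMulCommClass ℝ B B] [StarModule ℝ B]

theorem mul_star_derivs_eq_zero_of_mul_star_self_const {f f' f'' : ℝ → B} {c : B}
    (hf : ∀ t, HasDerivAt f (f' t) t) (hf' : ∀ t, HasDerivAt f' (f'' t) t)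
    (hc : ∀ t, f t * star (f t) = c) (t : ℝ) :
    f t * star (f' t) + f' t * star (f t) = 0 ∧
      f t * star (f'' t) + 2 • (f' t * star (f' t)) + f'' t * star (f t) = 0 := by
  have first (s : ℝ) : f s * star (f' s) + f' s * star (f s) = 0 := by
    have hG := (hf s).mul_star (hf s)
    rw [show (fun s => f s * star (f s)) = fun _ => c from funext hc] at hG
    exact hG.unique (hasDerivAt_const s c)
  refine ⟨first t, ?_⟩
  have hG' : HasDerivAt (fun s => f s * star (f' s) + f' s * star (f s)) _ t :=
    ((hf t).mul_star (hf' t)).add ((hf' t).mul_star (hf t))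
  rw [show (fun s => f s * star (f' s) + f' s * star (f s)) = fun _ => 0 from funext first]
    at hG'
  rw [(hasDerivAt_const t (0 : B)).unique hG']
  abel

theorem ContinuousLinearMap.mul_star_derivs_eq_zero_of_map_exp_mul_star_const {A : Type*}
    [NormedRing A] [NormedAlgebra ℝ A] [CompleteSpace A] (T : A →L[ℝ] B) {k : A} {c : B}
    (hc : ∀ t : ℝ, T (exp (t • k)) * star (T (exp (t • k))) = c) :
    T 1 * star (T k) + T k * star (T 1) = 0 ∧
      T 1 * star (T (k * k)) + 2 • (T k * star (T k)) + T (k * k) * star (T 1) = 0 := by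
  have hf (t : ℝ) : HasDerivAt (fun s : ℝ => T (exp (s • k))) (T (k * exp (t • k))) t :=
    T.hasFDerivAt.comp_hasDerivAt t (hasDerivAt_exp_smul_const' k t)
  have hf' (t : ℝ) :
      HasDerivAt (fun s : ℝ => T (k * exp (s • k))) (T (k * (k * exp (t • k)))) t :=
    T.hasFDerivAt.comp_hasDerivAt t ((hasDerivAt_exp_smul_const' k t).const_mul k)
  simpa using mul_star_derivs_eq_zero_of_mul_star_self_const hf hf' hc 0

end Derivatives

namespace IsStarHomAt

section Unitary

variable {A B : Type*} [Monoid A] [StarMul A] {T : A → B} {u : A}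

theorem mul_star_apply_of_mem_unitary [Mul B] [Star B] (hT : IsStarHomAt T 1)
    (hu : u ∈ unitary A) : T u * star (T u) = T 1 :=
  (hT.1 u u (Unitary.mul_star_self_of_mem hu)).2

theorem star_apply_mul_of_mem_unitary [Mul B] [Star B] (hT : IsStarHomAt T 1)
    (hu : u ∈ unitary A) : star (T u) * T u = T 1 :=
  (hT.2 u u (Unitary.star_mul_self_of_mem hu)).2

theorem isStarProjection_apply_one [Mul B] [StarMul B] (hT : IsStarHomAt T 1) :
    IsStarProjection (T 1) :=
  .of_mul_star_self_eq (hT.mul_star_apply_of_mem_unitary (one_mem _))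

variable [NonUnitalNormedRing B] [StarRing B] [CStarRing B]

theorem apply_mul_apply_one_of_mem_unitary (hT : IsStarHomAt T 1) (hu : u ∈ unitary A) :
    T u * T 1 = T u :=
  CStarRing.mul_eq_self_of_star_mul_self_eq hT.isStarProjection_apply_one.isIdempotentElem
    (hT.star_apply_mul_of_mem_unitary hu)

theorem apply_one_mul_apply_of_mem_unitary (hT : IsStarHomAt T 1) (hu : u ∈ unitary A) :
    T 1 * T u = T u := by
  have h := CStarRing.mul_eq_self_of_star_mul_self_eq (v := star (T u))
    hT.isStarProjection_apply_one.isIdempotentElem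
    (by rw [star_star, hT.mul_star_apply_of_mem_unitary hu])
  simpa [hT.isStarProjection_apply_one.isSelfAdjoint.star_eq] using congrArg star h

theorem norm_apply_le_one_of_mem_unitary (hT : IsStarHomAt T 1) (hu : u ∈ unitary A) :
    ‖T u‖ ≤ 1 :=
  CStarRing.norm_le_one_of_star_mul_self_eq hT.isStarProjection_apply_one
    (hT.star_apply_mul_of_mem_unitary hu)

end Unitary

section LinearMap

variable {A B : Type*} [CStarAlgebra A] [NonUnitalNormedRing B] [StarRing B] [CStarRing B]
  [NormedSpace ℂ B] {T : A →ₗ[ℂ] B}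

theorem apply_mul_apply_one [IsScalarTower ℂ B B] (hT : IsStarHomAt T 1) (a : A) :
    T a * T 1 = T a :=
  LinearMap.congr_fun (LinearMap.ext_on (CStarAlgebra.span_unitary A)
    (f := LinearMap.mulRight ℂ (T 1) ∘ₗ T) fun _ hu =>
      hT.apply_mul_apply_one_of_mem_unitary hu) a

theorem apply_one_mul_apply [SMulCommClass ℂ B B] (hT : IsStarHomAt T 1) (a : A) :
    T 1 * T a = T a :=
  LinearMap.congr_fun (LinearMap.ext_on (CStarAlgebra.span_unitary A)
    (f := LinearMap.mulLeft ℂ (T 1) ∘ₗ T) fun _ hu =>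
      hT.apply_one_mul_apply_of_mem_unitary hu) a

theorem continuous (hT : IsStarHomAt T 1) : Continuous T :=
  AddMonoidHomClass.continuous_of_bound T 2
    (CStarAlgebra.norm_apply_le_two_mul_of_forall_mem_unitary T fun _ hu =>
      hT.norm_apply_le_one_of_mem_unitary hu)

theorem mul_star_derivs_eq_zero_of_mem_skewAdjoint [IsScalarTower ℂ B B] [SMulCommClass ℂ B B]
    [StarModule ℂ B] (hT : IsStarHomAt T 1) {k : A} (hk : k ∈ skewAdjoint A) :
    T 1 * star (T k) + T k * star (T 1) = 0 ∧
      T 1 * star (T (k * k)) + 2 • (T k * star (T k)) + T (k * k) * star (T 1) = 0 :=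
  -- `exp_mem_unitary_of_mem_skewAdjoint` is stated for normed `ℚ`-algebras
  let +nondep : NormedAlgebra ℚ A := .restrictScalars ℚ ℂ A
  (⟨T.restrictScalars ℝ, hT.continuous⟩ : A →L[ℝ] B)
    |>.mul_star_derivs_eq_zero_of_map_exp_mul_star_const fun t => hT.mul_star_apply_of_mem_unitary
      (exp_mem_unitary_of_mem_skewAdjoint (skewAdjoint.smul_mem t hk))

variable [IsScalarTower ℂ B B] [SMulCommClass ℂ B B] [StarModule ℂ B]

theorem apply_mem_skewAdjoint (hT : IsStarHomAt T 1) {k : A} (hk : k ∈ skewAdjoint A) :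
    T k ∈ skewAdjoint B := by
  have hp := hT.isStarProjection_apply_one.isSelfAdjoint.star_eq
  have h := (hT.mul_star_derivs_eq_zero_of_mem_skewAdjoint hk).1
  have hl : T 1 * star (T k) = star (T k) := by
    simpa [hp] using congrArg star (hT.apply_mul_apply_one k)
  rw [hp, hT.apply_mul_apply_one, hl] at h
  exact skewAdjoint.mem_iff.mpr (eq_neg_of_add_eq_zero_left h)

theorem isSelfAdjoint_apply (hT : IsStarHomAt T 1) {h : A} (hh : IsSelfAdjoint h) :
    IsSelfAdjoint (T h) := by
  have := hT.apply_mem_skewAdjoint (hh.smul_mem_skewAdjoint conj_I)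
  rw [map_smul] at this
  simpa [smul_smul] using
    isSelfAdjoint_smul_of_mem_skewAdjoint (r := -I) (by simp [skewAdjoint.mem_iff]) this

theorem apply_mul_self_of_mem_skewAdjoint (hT : IsStarHomAt T 1) {k : A}
    (hk : k ∈ skewAdjoint A) : T (k * k) = T k * T k := by
  have hkk : IsSelfAdjoint (k * k) := by
    rw [IsSelfAdjoint, star_mul, skewAdjoint.mem_iff.mp hk, neg_mul_neg]
  have h := (hT.mul_star_derivs_eq_zero_of_mem_skewAdjoint hk).2
  rw [hT.isStarProjection_apply_one.isSelfAdjoint.star_eq, (hT.isSelfAdjoint_apply hkk).star_eq,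
    skewAdjoint.mem_iff.mp (hT.apply_mem_skewAdjoint hk), hT.apply_one_mul_apply,
    hT.apply_mul_apply_one, mul_neg] at h
  linear_combination (norm := module) (2⁻¹ : ℂ) • h

theorem apply_mul_self (hT : IsStarHomAt T 1) {h : A} (hh : IsSelfAdjoint h) :
    T (h * h) = T h * T h := by
  have := hT.apply_mul_self_of_mem_skewAdjoint (hh.smul_mem_skewAdjoint conj_I)
  rwa [smul_mul_smul_comm, I_mul_I, map_smul, map_smul, smul_mul_smul_comm, I_mul_I,
    neg_one_smul, neg_one_smul, neg_inj] at this

end LinearMap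

end IsStarHomAt

open ComplexStarModule in
theorem LinearMap.map_star_of_isSelfAdjoint {A B : Type*} [AddCommGroup A] [StarAddMonoid A]
    [Module ℂ A] [StarModule ℂ A] [AddCommGroup B] [StarAddMonoid B] [Module ℂ B]
    [StarModule ℂ B]
    (T : A →ₗ[ℂ] B) (hT : ∀ x, IsSelfAdjoint x → IsSelfAdjoint (T x)) (a : A) :
    T (star a) = star (T a) := by
  rw [← realPart_add_I_smul_imaginaryPart a]
  simp only [star_add, star_smul, map_add, map_smul, (ℜ a).2.star_eq, (ℑ a).2.star_eq,
    (hT _ (ℜ a).2).star_eq, (hT _ (ℑ a).2).star_eq]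

open ComplexStarModule in
theorem LinearMap.map_mul_self_of_isSelfAdjoint {A B : Type*} [Ring A] [StarRing A]
    [Algebra ℂ A] [StarModule ℂ A] [NonUnitalRing B] [Module ℂ B] [IsScalarTower ℂ B B]
    [SMulCommClass ℂ B B]
    (T : A →ₗ[ℂ] B) (hT : ∀ x, IsSelfAdjoint x → T (x * x) = T x * T x) (a : A) :
    T (a * a) = T a * T a := by
  have hx := hT _ (ℜ a).2
  have hy := hT _ (ℑ a).2
  have hxy := hT _ ((ℜ a).2.add (ℑ a).2)
  rw [← realPart_add_I_smul_imaginaryPart a]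
  simp only [add_mul, mul_add, map_add, map_smul, smul_mul_assoc, mul_smul_comm] at hxy ⊢
  linear_combination (norm := module) hx + (I * I) • hy + I • (hxy - hx - hy)

theorem stmt4_general {A B : Type*}
    [NormedRing A] [StarRing A] [CStarRing A] [CompleteSpace A]
    [NormedAlgebra ℂ A] [StarModule ℂ A]
    [NonUnitalNormedRing B] [StarRing B] [CStarRing B]
    [NormedSpace ℂ B] [IsScalarTower ℂ B B] [SMulCommClass ℂ B B] [StarModule ℂ B]
    (T : A →ₗ[ℂ] B)
    (h : IsStarHomAt (⇑T) 1) :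
    (∀ a : A, T (star a) = star (T a)) ∧ (∀ a : A, T (a * a) = T a * T a) := by
  let : CStarAlgebra A := {}
  exact ⟨T.map_star_of_isSelfAdjoint fun _ hx => h.isSelfAdjoint_apply hx,
    T.map_mul_self_of_isSelfAdjoint fun _ hx => h.apply_mul_self hx⟩

theorem stmt4 {A B : Type*}
    [NormedRing A] [StarRing A] [CStarRing A] [CompleteSpace A]
    [NormedAlgebra ℂ A] [StarModule ℂ A]
    [NonUnitalNormedRing B] [StarRing B] [CStarRing B] [CompleteSpace B]
    [NormedSpace ℂ B] [IsScalarTower ℂ B B] [SMulCommClass ℂ B B] [StarModule ℂ B]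
    (T : A →ₗ[ℂ] B)
    (h : IsStarHomAt (⇑T) 1) :
    (∀ a : A, T (star a) = star (T a)) ∧ (∀ a : A, T (a * a) = T a * T a) :=
  stmt4_general T h
end

section
/- Let A and B be C*-algebras with A unital, and let T : A → B be a linear map satisfying: (a) for all a, b ∈ A, a b* = 1 implies T(a) T(b)* = T(1); and (b) for all c, d ∈ A, c* d = 0 implies T(c)* T(d) = 0. Then T is a *-homomorphism, i.e., T(xy) = T(x) T(y) and T(x*) = T(x)* for all x, y ∈ A. -/
/-!
By (a) applied to unitaries, `e = T 1` satisfies `e e* = e`, so it is a projection, and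
`T u (T u)* = e` forces `e T u = T u` and `‖T u‖ ≤ 1`. Unitaries span `A`, so `T` is bounded and
`e T x = T x` for all `x`.

The core is `(T z)* T y = e T (z y)` for self-adjoint `z`. By (b) the real bilinear form
`Φ c d = (T c)* T (d y)` vanishes whenever `c* d = 0`. Tent functions of mesh one applied to `z`
give pieces `p_j` with `Σ p_j = 1`, `p_j p_l = 0` for `|j - l| ≥ 2` and `z ≈ Σ j p_j` up to norm
one, so `Φ z 1 - Φ 1 z` is, up to a bounded error, the sum of the neighbour terms
`Φ p_{j+1} p_j - Φ p_j p_{j+1}`. Grouping the indices mod 3 collapses each group to one value of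
`Φ` at arguments of norm at most one, so `Φ z 1 - Φ 1 z` is bounded independently of `z`, and
scaling `z` makes it vanish. Splitting an arbitrary element into real and imaginary parts, `y = 1`
gives `T x* = (T x)*`, and then the identity reads `T x T y = T (x y)`.
-/

open Finset

namespace Tent

noncomputable def ramp (t : ℝ) : ℝ := max 0 (min 1 t)

-- This is the hat function `max 0 (1 - |t - j|)`, written as a difference of ramps so that
-- consecutive tents telescope.
noncomputable def tent (j : ℕ) (t : ℝ) : ℝ := ramp (j + 1 - t) - ramp (j - t)

lemma ramp_mono {s t : ℝ} (h : s ≤ t) : ramp s ≤ ramp t :=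
  max_le_max le_rfl (min_le_min le_rfl h)

lemma ramp_eq_one {t : ℝ} (h : 1 ≤ t) : ramp t = 1 := by simp [ramp, h]

lemma ramp_eq_zero {t : ℝ} (h : t ≤ 0) : ramp t = 0 := by
  simp [ramp, min_le_of_right_le h]

lemma ramp_nonneg (t : ℝ) : 0 ≤ ramp t := le_max_left _ _

lemma ramp_le_one (t : ℝ) : ramp t ≤ 1 := max_le zero_le_one (min_le_left _ _)

@[fun_prop]
lemma continuous_tent (j : ℕ) : Continuous (tent j) := by
  unfold tent ramp; fun_prop

lemma tent_nonneg (j : ℕ) (t : ℝ) : 0 ≤ tent j t :=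
  sub_nonneg.mpr (ramp_mono (by linarith))

lemma tent_eq_zero_of_le {j : ℕ} {t : ℝ} (h : t ≤ j - 1) : tent j t = 0 := by
  rw [tent, ramp_eq_one (by linarith), ramp_eq_one (by linarith), sub_self]

lemma tent_eq_zero_of_ge {j : ℕ} {t : ℝ} (h : j + 1 ≤ t) : tent j t = 0 := by
  rw [tent, ramp_eq_zero (by linarith), ramp_eq_zero (by linarith), sub_self]

lemma tent_mul_tent_eq_zero {j l : ℕ} (h : j + 2 ≤ l) (t : ℝ) : tent j t * tent l t = 0 := by
  have h' : (j : ℝ) + 2 ≤ l := by exact_mod_cast h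
  rcases le_total (j + 1 : ℝ) t with ht | ht
  · rw [tent_eq_zero_of_ge ht, zero_mul]
  · rw [tent_eq_zero_of_le (j := l) (by linarith), mul_zero]

lemma sum_range_tent (M : ℕ) (t : ℝ) : ∑ j ∈ range M, tent j t = ramp (M - t) - ramp (-t) := by
  simpa [tent, add_sub_right_comm] using sum_range_sub (fun j : ℕ => ramp (j - t)) M

lemma sum_range_tent_eq_one {M : ℕ} {t : ℝ} (h₀ : 0 ≤ t) (hM : t ≤ M - 1) :
    ∑ j ∈ range M, tent j t = 1 := by
  rw [sum_range_tent, ramp_eq_one (by linarith), ramp_eq_zero (by linarith), sub_zero]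

lemma sum_tent_le_one (J : Finset ℕ) (t : ℝ) : ∑ j ∈ J, tent j t ≤ 1 := by
  obtain ⟨M, hM⟩ : ∃ M, J ⊆ range M := ⟨J.sup id + 1, fun j hj =>
    mem_range.mpr (Nat.lt_succ_of_le (le_sup (f := id) hj))⟩
  calc ∑ j ∈ J, tent j t ≤ ∑ j ∈ range M, tent j t :=
        sum_le_sum_of_subset_of_nonneg hM fun j _ _ => tent_nonneg j t
    _ = ramp (M - t) - ramp (-t) := sum_range_tent M t
    _ ≤ 1 := by linarith [ramp_le_one (M - t), ramp_nonneg (-t)]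

lemma abs_sub_mul_tent_le (j : ℕ) (t : ℝ) : |t - j| * tent j t ≤ tent j t := by
  rcases le_or_gt 1 |t - j| with h | h
  · rcases le_abs'.mp h with h | h
    · rw [tent_eq_zero_of_le (by linarith), mul_zero]
    · rw [tent_eq_zero_of_ge (by linarith), mul_zero]
  · exact mul_le_of_le_one_left (tent_nonneg j t) h.le

lemma abs_sub_sum_range_mul_tent_le {M : ℕ} {t : ℝ} (h₀ : 0 ≤ t) (hM : t ≤ M) :
    |t - ∑ j ∈ range (M + 1), (j : ℝ) * tent j t| ≤ 1 := by
  have hsum : ∑ j ∈ range (M + 1), tent j t = 1 := sum_range_tent_eq_one h₀ (by push_cast; linarith)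
  calc |t - ∑ j ∈ range (M + 1), (j : ℝ) * tent j t|
      = |∑ j ∈ range (M + 1), (t - j) * tent j t| := by
        simp only [sub_mul, sum_sub_distrib, ← mul_sum, hsum, mul_one]
    _ ≤ ∑ j ∈ range (M + 1), |t - j| * tent j t := by
        simpa only [abs_mul, abs_of_nonneg (tent_nonneg _ _)] using
          abs_sum_le_sum_abs (fun j : ℕ => (t - j) * tent j t) (range (M + 1))
    _ ≤ ∑ j ∈ range (M + 1), tent j t := sum_le_sum fun j _ => abs_sub_mul_tent_le j t
    _ = 1 := hsum

end Tent

open Tent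

section FiniteSums

variable {E : Type*} [AddCommGroup E] [Module ℝ E]

lemma sum_range_sum_range_sub_smul (F : ℕ → ℕ → E)
    (hF : ∀ j l, j + 2 ≤ l ∨ l + 2 ≤ j → F j l = 0) (M : ℕ) :
    ∑ j ∈ range (M + 1), ∑ l ∈ range (M + 1), ((j : ℝ) - l) • F j l
      = ∑ j ∈ range M, (F (j + 1) j - F j (j + 1)) := by
  induction M with
  | zero => simp
  | succ M ih =>
    have hrow : ∑ l ∈ range (M + 1), (((M + 1 : ℕ) : ℝ) - l) • F (M + 1) l = F (M + 1) M := by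
      rw [sum_range_succ, sum_eq_zero fun l hl => by
        rw [hF _ _ (Or.inr (by have := mem_range.mp hl; omega)), smul_zero]]
      push_cast; simp
    have hcol :
        ∑ j ∈ range (M + 1), ((j : ℝ) - ((M + 1 : ℕ) : ℝ)) • F j (M + 1) = - F M (M + 1) := by
      rw [sum_range_succ, sum_eq_zero fun j hj => by
        rw [hF _ _ (Or.inl (by have := mem_range.mp hj; omega)), smul_zero]]
      push_cast; simp
    have hsplit : ∀ j : ℕ, ∑ l ∈ range (M + 1 + 1), ((j : ℝ) - l) • F j l
        = ∑ l ∈ range (M + 1), ((j : ℝ) - l) • F j l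
          + ((j : ℝ) - ((M + 1 : ℕ) : ℝ)) • F j (M + 1) :=
      fun j => sum_range_succ _ _
    rw [sum_range_succ, sum_congr rfl fun j _ => hsplit j, sum_add_distrib, hsplit, ih, hrow, hcol,
      sum_range_succ _ M, sub_self, zero_smul, add_zero]
    abel

end FiniteSums

section UnitMeshPartition

variable {A : Type*} [CStarAlgebra A]

-- `p j` is the part of `w` whose spectrum lies near `j + s`.
structure IsUnitMeshPartition (w : A) (M : ℕ) (s : ℝ) (p : ℕ → A) : Prop where
  sum_eq_one : ∑ j ∈ range (M + 1), p j = 1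
  star_mul_eq_zero : ∀ j l, j + 2 ≤ l ∨ l + 2 ≤ j → star (p j) * p l = 0
  norm_sum_le_one : ∀ J : Finset ℕ, ‖∑ j ∈ J, p j‖ ≤ 1
  norm_sub_sum_le_one : ‖w - ∑ j ∈ range (M + 1), ((j : ℝ) + s) • p j‖ ≤ 1

lemma sum_smul_cfc (g : ℕ → ℝ → ℝ) (hg : ∀ j, Continuous (g j)) (c : ℕ → ℝ) (J : Finset ℕ)
    (w : A) : ∑ j ∈ J, c j • cfc (g j) w = cfc (fun t => ∑ j ∈ J, c j * g j t) w := by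
  rw [← Finset.sum_fn, cfc_sum _ _ _ fun j _ => by fun_prop]
  exact sum_congr rfl fun j _ => (cfc_const_mul _ _ _ (hg j).continuousOn).symm

lemma IsSelfAdjoint.exists_isUnitMeshPartition {w : A} (hw : IsSelfAdjoint w) :
    ∃ M s p, IsUnitMeshPartition w M s p := by
  obtain ⟨N, hN⟩ := exists_nat_ge (‖w‖ * ‖(1 : A)‖)
  set g : ℕ → ℝ → ℝ := fun j t => tent j (t + N)
  have hg : ∀ j, Continuous (g j) := fun j => by fun_prop
  have hspec : ∀ t ∈ spectrum ℝ w, 0 ≤ t + N ∧ t + N ≤ (2 * N : ℕ) := fun t ht => by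
    have := abs_le.mp ((spectrum.norm_le_norm_mul_of_mem ht).trans hN)
    push_cast; constructor <;> linarith
  have hsum : ∀ t ∈ spectrum ℝ w, ∑ j ∈ range (2 * N + 1), g j t = 1 := fun t ht =>
    sum_range_tent_eq_one (hspec t ht).1 (by push_cast at hspec ⊢; linarith [(hspec t ht).2])
  refine ⟨2 * N, -N, fun j => cfc (g j) w, ⟨?_, ?_, fun J => ?_, ?_⟩⟩
  · have := sum_smul_cfc g hg 1 (range (2 * N + 1)) w
    simp only [Pi.one_apply, one_smul, one_mul] at this
    rw [this, cfc_congr hsum, cfc_const_one ℝ w]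
  · intro j l hjl
    rw [(cfc_predicate (g j) w).star_eq, ← cfc_mul (g j) (g l) w, ← cfc_zero ℝ w]
    refine cfc_congr fun t _ => ?_
    rcases hjl with h | h
    · exact tent_mul_tent_eq_zero h _
    · exact (mul_comm _ _).trans (tent_mul_tent_eq_zero h _)
  · have := sum_smul_cfc g hg 1 J w
    simp only [Pi.one_apply, one_smul, one_mul] at this
    rw [this]
    refine norm_cfc_le zero_le_one fun t _ => ?_
    rw [Real.norm_eq_abs, abs_of_nonneg (sum_nonneg fun j _ => tent_nonneg j _)]
    exact sum_tent_le_one J (t + N)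
  · nth_rewrite 1 [← cfc_id' ℝ w]
    rw [sum_smul_cfc g hg, ← cfc_sub (fun t => t) _ w]
    refine norm_cfc_le zero_le_one fun t ht => ?_
    have hshift : ∑ j ∈ range (2 * N + 1), ((j : ℝ) + -N) * g j t
        = ∑ j ∈ range (2 * N + 1), (j : ℝ) * g j t - N := by
      simp only [add_mul, sum_add_distrib, neg_mul, sum_neg_distrib, ← mul_sum, hsum t ht, mul_one,
        sub_eq_add_neg]
    rw [Real.norm_eq_abs, hshift, sub_sub_eq_add_sub]
    exact abs_sub_sum_range_mul_tent_le (hspec t ht).1 (hspec t ht).2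

end UnitMeshPartition

section OrthogonalBilinear

variable {A E : Type*} [CStarAlgebra A] [SeminormedAddCommGroup E] [NormedSpace ℝ E]
variable (Φ : A →L[ℝ] A →L[ℝ] E)

lemma apply_sum_sum_of_star_mul_eq_zero (hΦ : ∀ c d, star c * d = 0 → Φ c d = 0)
    {ι : Type*} (J : Finset ι) (a b : ι → A)
    (hab : ∀ j ∈ J, ∀ l ∈ J, j ≠ l → star (a j) * b l = 0) :
    Φ (∑ j ∈ J, a j) (∑ l ∈ J, b l) = ∑ j ∈ J, Φ (a j) (b j) := by
  simp only [map_sum, FunLike.coe_sum, Finset.sum_apply]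
  refine sum_congr rfl fun j hj => sum_eq_single_of_mem j hj fun l hl hlj => ?_
  exact hΦ _ _ (hab l hl j hj hlj)

lemma norm_sum_apply_le_of_star_mul_eq_zero (hΦ : ∀ c d, star c * d = 0 → Φ c d = 0)
    {k : ℕ} (hk : k ≠ 0) (a b : ℕ → A)
    (hab : ∀ j l, j ≠ l → j % k = l % k → star (a j) * b l = 0)
    (ha : ∀ J : Finset ℕ, ‖∑ j ∈ J, a j‖ ≤ 1) (hb : ∀ J : Finset ℕ, ‖∑ j ∈ J, b j‖ ≤ 1)
    (S : Finset ℕ) : ‖∑ j ∈ S, Φ (a j) (b j)‖ ≤ k * ‖Φ‖ := by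
  rw [← sum_fiberwise_of_maps_to (g := (· % k)) (t := range k)
    fun j _ => mem_range.mpr (Nat.mod_lt j (Nat.pos_of_ne_zero hk))]
  calc ‖∑ r ∈ range k, ∑ j ∈ S with j % k = r, Φ (a j) (b j)‖
      ≤ ∑ r ∈ range k, ‖∑ j ∈ S with j % k = r, Φ (a j) (b j)‖ := norm_sum_le _ _
    _ ≤ ∑ _r ∈ range k, ‖Φ‖ := by
      refine sum_le_sum fun r _ => ?_
      rw [← apply_sum_sum_of_star_mul_eq_zero Φ hΦ _ a b fun j hj l hl hjl =>
        hab j l hjl (by rw [(mem_filter.mp hj).2, (mem_filter.mp hl).2])]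
      calc _ ≤ ‖Φ‖ * ‖∑ j ∈ S with j % k = r, a j‖ * ‖∑ j ∈ S with j % k = r, b j‖ :=
            Φ.le_opNorm₂ _ _
        _ ≤ ‖Φ‖ * 1 * 1 := by gcongr <;> [exact ha _; exact hb _]
        _ = ‖Φ‖ := by ring
    _ = k * ‖Φ‖ := by simp

lemma IsUnitMeshPartition.norm_apply_sum_smul_sub_le {w : A} {M : ℕ} {s : ℝ} {p : ℕ → A}
    (hP : IsUnitMeshPartition w M s p) (hΦ : ∀ c d, star c * d = 0 → Φ c d = 0) :
    ‖Φ (∑ j ∈ range (M + 1), ((j : ℝ) + s) • p j) 1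
      - Φ 1 (∑ j ∈ range (M + 1), ((j : ℝ) + s) • p j)‖ ≤ 6 * ‖Φ‖ := by
  set z := ∑ j ∈ range (M + 1), ((j : ℝ) + s) • p j with hz
  have hfar : ∀ j l, j + 2 ≤ l ∨ l + 2 ≤ j → Φ (p j) (p l) = 0 :=
    fun j l h => hΦ _ _ (hP.star_mul_eq_zero j l h)
  have hneighbours :
      Φ z 1 - Φ 1 z = ∑ j ∈ range M, (Φ (p (j + 1)) (p j) - Φ (p j) (p (j + 1))) := by
    rw [← sum_range_sum_range_sub_smul _ hfar, ← hP.sum_eq_one, hz]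
    simp only [map_sum, map_smul, FunLike.coe_sum, Finset.sum_apply,
      FunLike.coe_smul, Pi.smul_apply, smul_sum, ← sum_sub_distrib, ← sub_smul]
    rw [sum_comm]
    refine sum_congr rfl fun j _ => sum_congr rfl fun l _ => ?_
    congr 1; ring
  have hshift : ∀ J : Finset ℕ, ‖∑ j ∈ J, p (j + 1)‖ ≤ 1 := fun J => by
    simpa [sum_map] using hP.norm_sum_le_one (J.map (addRightEmbedding 1))
  have hup : ‖∑ j ∈ range M, Φ (p (j + 1)) (p j)‖ ≤ 3 * ‖Φ‖ := by
    exact_mod_cast norm_sum_apply_le_of_star_mul_eq_zero Φ hΦ three_ne_zero (p <| · + 1) p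
      (fun j l hjl hjl₃ => hP.star_mul_eq_zero _ _ (by omega)) hshift hP.norm_sum_le_one _
  have hdown : ‖∑ j ∈ range M, Φ (p j) (p (j + 1))‖ ≤ 3 * ‖Φ‖ := by
    exact_mod_cast norm_sum_apply_le_of_star_mul_eq_zero Φ hΦ three_ne_zero p (p <| · + 1)
      (fun j l hjl hjl₃ => hP.star_mul_eq_zero _ _ (by omega)) hP.norm_sum_le_one hshift _
  rw [hneighbours, sum_sub_distrib]
  linarith [norm_sub_le_of_le hup hdown]

lemma IsUnitMeshPartition.norm_apply_one_sub_le {w : A} {M : ℕ} {s : ℝ} {p : ℕ → A}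
    (hP : IsUnitMeshPartition w M s p) (hΦ : ∀ c d, star c * d = 0 → Φ c d = 0) :
    ‖Φ w 1 - Φ 1 w‖ ≤ 8 * ‖Φ‖ := by
  set z := ∑ j ∈ range (M + 1), ((j : ℝ) + s) • p j
  have hone : ‖(1 : A)‖ ≤ 1 := hP.sum_eq_one ▸ hP.norm_sum_le_one _
  have hwz := hP.norm_sub_sum_le_one
  have happrox : ‖Φ (w - z) 1 - Φ 1 (w - z)‖ ≤ 2 * ‖Φ‖ :=
    calc _ ≤ ‖Φ (w - z) 1‖ + ‖Φ 1 (w - z)‖ := norm_sub_le _ _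
      _ ≤ ‖Φ‖ * ‖w - z‖ * ‖(1 : A)‖ + ‖Φ‖ * ‖(1 : A)‖ * ‖w - z‖ :=
        add_le_add (Φ.le_opNorm₂ _ _) (Φ.le_opNorm₂ _ _)
      _ ≤ ‖Φ‖ * 1 * 1 + ‖Φ‖ * 1 * 1 := by gcongr
      _ = 2 * ‖Φ‖ := by ring
  calc ‖Φ w 1 - Φ 1 w‖ = ‖(Φ (w - z) 1 - Φ 1 (w - z)) + (Φ z 1 - Φ 1 z)‖ := by
        simp only [map_sub, sub_apply]; abel_nf
    _ ≤ 2 * ‖Φ‖ + 6 * ‖Φ‖ :=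
        norm_add_le_of_le happrox (hP.norm_apply_sum_smul_sub_le Φ hΦ)
    _ = 8 * ‖Φ‖ := by ring

end OrthogonalBilinear

theorem IsSelfAdjoint.apply_one_eq_of_star_mul_eq_zero {A E : Type*} [CStarAlgebra A]
    [NormedAddCommGroup E] [NormedSpace ℝ E] {z : A} (hz : IsSelfAdjoint z)
    (Φ : A →L[ℝ] A →L[ℝ] E) (hΦ : ∀ c d, star c * d = 0 → Φ c d = 0) : Φ z 1 = Φ 1 z := by
  have hbound : ∀ r : ℝ, |r| * ‖Φ z 1 - Φ 1 z‖ ≤ 8 * ‖Φ‖ := fun r => by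
    obtain ⟨M, s, p, hP⟩ := ((IsSelfAdjoint.all r).smul hz).exists_isUnitMeshPartition
    simpa [← smul_sub, norm_smul] using hP.norm_apply_one_sub_le Φ hΦ
  rw [← sub_eq_zero, ← norm_le_zero_iff]
  by_contra! h
  have := hbound ((8 * ‖Φ‖ + 1) / ‖Φ z 1 - Φ 1 z‖)
  rw [abs_of_pos (by positivity), div_mul_cancel₀ _ h.ne'] at this
  linarith

lemma isStarProjection_of_mul_star_self_eq {R : Type*} [Mul R] [StarMul R] {e : R}
    (he : e * star e = e) : IsStarProjection e := by
  have hsa : star e = e := by nth_rewrite 1 [← he]; rw [star_mul, star_star, he]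
  rw [hsa] at he
  exact ⟨he, hsa⟩

lemma LinearMap.isStarProjection_map_one_of_unitary {A B : Type*} [CStarAlgebra A]
    [NonUnitalNonAssocSemiring B] [StarMul B] [Module ℂ B] (T : A →ₗ[ℂ] B)
    (hT : ∀ u ∈ unitary A, T u * star (T u) = T 1) : IsStarProjection (T 1) :=
  isStarProjection_of_mul_star_self_eq (hT 1 (one_mem _))

section StarProjection

variable {B : Type*} [NonUnitalNormedRing B] [StarRing B] [CStarRing B]

lemma IsStarProjection.mul_eq_self_of_mul_star_self_eq {e k : B} (he : IsStarProjection e)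
    (hk : k * star k = e) : e * k = k := by
  have hzero : (k - e * k) * star (k - e * k) = 0 := by
    have hee : e * e = e := he.isIdempotentElem
    have hek : e * k * star k = e := by rw [mul_assoc, hk, hee]
    simp only [star_sub, star_mul, he.isSelfAdjoint.star_eq, sub_mul, mul_sub, ← mul_assoc, hk,
      hek, sub_self, zero_mul]
  exact (sub_eq_zero.mp ((CStarRing.mul_star_self_eq_zero_iff _).mp hzero)).symm

lemma IsStarProjection.norm_le_one_of_mul_star_self_eq {e k : B} (he : IsStarProjection e)
    (hk : k * star k = e) : ‖k‖ ≤ 1 := by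
  have : ‖k‖ * ‖k‖ ≤ 1 := by rw [← CStarRing.norm_self_mul_star, hk]; exact he.norm_le
  nlinarith [norm_nonneg k]

end StarProjection

section Unitary

variable {A B : Type*} [CStarAlgebra A]
  [NonUnitalNormedRing B] [StarRing B] [CStarRing B] [NormedSpace ℂ B]

lemma LinearMap.map_one_mul_map_of_unitary [SMulCommClass ℂ B B] (T : A →ₗ[ℂ] B)
    (hT : ∀ u ∈ unitary A, T u * star (T u) = T 1) (x : A) : T 1 * T x = T x := by
  obtain ⟨u, c, rfl, -⟩ := CStarAlgebra.exists_sum_four_unitary x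
  simp only [map_sum, map_smul, mul_sum, mul_smul_comm,
    (T.isStarProjection_map_one_of_unitary hT).mul_eq_self_of_mul_star_self_eq (hT _ (u _).2)]

lemma LinearMap.norm_map_le_of_unitary (T : A →ₗ[ℂ] B)
    (hT : ∀ u ∈ unitary A, T u * star (T u) = T 1) (x : A) : ‖T x‖ ≤ 2 * ‖x‖ := by
  obtain ⟨u, c, hx, hc⟩ := CStarAlgebra.exists_sum_four_unitary x
  have hu : ∀ i, ‖T (u i)‖ ≤ 1 := fun i =>
    (T.isStarProjection_map_one_of_unitary hT).norm_le_one_of_mul_star_self_eq (hT _ (u i).2)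
  calc ‖T x‖ ≤ ∑ i, ‖c i‖ * ‖T (u i)‖ := by
        rw [hx, map_sum]
        simpa only [map_smul, norm_smul] using norm_sum_le univ fun i => c i • T (u i)
    _ ≤ ∑ _i : Fin 4, ‖x‖ / 2 * 1 := by gcongr with i; exacts [hc i, hu i]
    _ = 2 * ‖x‖ := by rw [sum_const, card_univ, Fintype.card_fin, nsmul_eq_mul]; ring

end Unitary

section OrthogonalityPreserving

open scoped ComplexStarModule

variable {A B : Type*} [CStarAlgebra A]
  [NonUnitalNormedRing B] [StarRing B] [CStarRing B] [NormedSpace ℂ B] [IsScalarTower ℂ B B]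
  [SMulCommClass ℂ B B] [StarModule ℂ B]

lemma ContinuousLinearMap.star_map_mul_map_of_isSelfAdjoint (T : A →L[ℂ] B)
    (hT : ∀ c d, star c * d = 0 → star (T c) * T d = 0)
    {z : A} (hz : IsSelfAdjoint z) (y : A) : star (T z) * T y = star (T 1) * T (z * y) := by
  have hTℝ : ∀ (r : ℝ) x, T (r • x) = r • T x := (T.restrictScalars ℝ).map_smul
  let Φ : A →L[ℝ] A →L[ℝ] B := LinearMap.mkContinuous₂ (LinearMap.mk₂ ℝ
    (fun c d => star (T c) * T (d * y))
    (fun c₁ c₂ d => by simp only [map_add, star_add, add_mul])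
    (fun r c d => by simp only [hTℝ, star_smul, star_trivial, smul_mul_assoc])
    (fun c d₁ d₂ => by simp only [add_mul, map_add, mul_add])
    (fun r c d => by simp only [smul_mul_assoc, hTℝ, mul_smul_comm]))
    (‖T‖ * (‖T‖ * ‖y‖)) fun c d => by
      calc ‖star (T c) * T (d * y)‖ ≤ ‖T c‖ * ‖T (d * y)‖ := by
            simpa only [norm_star] using norm_mul_le (star (T c)) (T (d * y))
        _ ≤ (‖T‖ * ‖c‖) * (‖T‖ * (‖d‖ * ‖y‖)) := by
            gcongr
            · exact T.le_opNorm c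
            · exact (T.le_opNorm _).trans (by gcongr; exact norm_mul_le d y)
        _ = ‖T‖ * (‖T‖ * ‖y‖) * ‖c‖ * ‖d‖ := by ring
  have h : star (T z) * T (1 * y) = star (T 1) * T (z * y) :=
    hz.apply_one_eq_of_star_mul_eq_zero Φ fun c d h =>
      hT c (d * y) (by rw [← mul_assoc, h, zero_mul])
  rwa [one_mul] at h

lemma ContinuousLinearMap.star_map_star_mul_map (T : A →L[ℂ] B)
    (hT : ∀ c d, star c * d = 0 → star (T c) * T d = 0) (w y : A) :
    star (T (star w)) * T y = star (T 1) * T (w * y) := by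
  rw [← realPart_add_I_smul_imaginaryPart w]
  simp only [star_add, star_smul, (ℜ w).2.star_eq, (ℑ w).2.star_eq, Complex.star_def,
    Complex.conj_I, neg_smul, map_add, map_neg, map_smul, star_neg, neg_neg, add_mul, mul_add,
    smul_mul_assoc, mul_smul_comm, T.star_map_mul_map_of_isSelfAdjoint hT (ℜ w).2,
    T.star_map_mul_map_of_isSelfAdjoint hT (ℑ w).2]

end OrthogonalityPreserving

theorem stmt6_general {A B : Type*}
    [NormedRing A] [StarRing A] [CStarRing A] [CompleteSpace A]
    [NormedAlgebra ℂ A] [StarModule ℂ A]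
    [NonUnitalNormedRing B] [StarRing B] [CStarRing B]
    [NormedSpace ℂ B] [IsScalarTower ℂ B B] [SMulCommClass ℂ B B] [StarModule ℂ B]
    (T : A →ₗ[ℂ] B)
    (ha : ∀ a b : A, a * star b = 1 → T a * star (T b) = T 1)
    (hb : ∀ c d : A, star c * d = 0 → star (T c) * T d = 0) :
    (∀ x y : A, T (x * y) = T x * T y) ∧ (∀ x : A, T (star x) = star (T x)) := by
  let _ : CStarAlgebra A := {}
  have hU : ∀ u ∈ unitary A, T u * star (T u) = T 1 :=
    fun u hu => ha u u (Unitary.mul_star_self_of_mem hu)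
  have hT1 := (T.isStarProjection_map_one_of_unitary hU).isSelfAdjoint.star_eq
  let T' : A →L[ℂ] B := T.mkContinuous 2 (T.norm_map_le_of_unitary hU)
  have key : ∀ w y, star (T (star w)) * T y = T (w * y) := fun w y => by
    simpa [T', hT1, T.map_one_mul_map_of_unitary hU] using T'.star_map_star_mul_map hb w y
  have hstar : ∀ x, T (star x) = star (T x) := fun x => by
    have h := key (star x) 1
    rw [star_star, mul_one] at h
    rw [← h, ← hT1, ← star_mul, T.map_one_mul_map_of_unitary hU]
  exact ⟨fun x y => by rw [← key x y, hstar, star_star], hstar⟩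

theorem stmt6 {A B : Type*}
    [NormedRing A] [StarRing A] [CStarRing A] [CompleteSpace A]
    [NormedAlgebra ℂ A] [StarModule ℂ A]
    [NonUnitalNormedRing B] [StarRing B] [CStarRing B] [CompleteSpace B]
    [NormedSpace ℂ B] [IsScalarTower ℂ B B] [SMulCommClass ℂ B B] [StarModule ℂ B]
    (T : A →ₗ[ℂ] B)
    (ha : ∀ a b : A, a * star b = 1 → T a * star (T b) = T 1)
    (hb : ∀ c d : A, star c * d = 0 → star (T c) * T d = 0) :
    (∀ x y : A, T (x * y) = T x * T y) ∧ (∀ x : A, T (star x) = star (T x)) :=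
  stmt6_general T ha hb
end
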